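/- For every word w and every column γ over A, there exists a word u such that γw ≡_styl u·(γ·w), where γ on the left denotes the decreasing word of the column γ and γ·w is the result of the right action of w on γ. -/

import Mathlib

noncomputable section

open FreeMonoid

/-- The defining relations of the stylic congruence: the Knuth (plactic)
relations together with the idempotent relations `a² ≡ a`. -/
inductive StylicRel (A : Type*) [LinearOrder A] : FreeMonoid A → FreeMonoid A → Prop
  | knuth1 {a b c : A} : a < b → b < c →
      StylicRel A (ofList [b, a, c]) (ofList [b, c, a])
  | knuth2 {a b c : A} : a < b → b < c →
      StylicRel A (ofList [a, c, b]) (ofList [c, a, b])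
  | knuth3 {a b : A} : a < b →
      StylicRel A (ofList [b, a, b]) (ofList [b, b, a])
  | knuth4 {a b : A} : a < b →
      StylicRel A (ofList [a, b, a]) (ofList [b, a, a])
  | idem (a : A) : StylicRel A (ofList [a, a]) (ofList [a])

/-- The stylic congruence on the free monoid `A*`. -/
def stylCon (A : Type*) [LinearOrder A] : Con (FreeMonoid A) := conGen (StylicRel A)

/-- The stylic monoid `Styl(A)`. -/
abbrev Styl (A : Type*) [LinearOrder A] := (stylCon A).Quotient

/-- Right action of a letter `c` on a column `γ`: if `c < min γ` then
`γ ∪ {c}`; otherwise replace `max {x ∈ γ : x ≤ c}` (the bumped letter) by `c`. -/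
def rIns {A : Type*} [LinearOrder A] (γ : Finset A) (c : A) : Finset A :=
  if h : (γ.filter (· ≤ c)).Nonempty then
    insert c (γ.erase ((γ.filter (· ≤ c)).max' h))
  else insert c γ

/-- Schensted left column insertion of a letter `b` into a column `δ`:
if `b > max δ` then `δ ∪ {b}`; otherwise replace `min {x ∈ δ : x ≥ b}`
(the bumped letter) by `b`. -/
def lIns {A : Type*} [LinearOrder A] (b : A) (δ : Finset A) : Finset A :=
  if h : (δ.filter (b ≤ ·)).Nonempty then
    insert b (δ.erase ((δ.filter (b ≤ ·)).min' h))
  else insert b δ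

/-- The right action of a word on a column, `γ·(uv) = (γ·u)·v`. -/
def rActW {A : Type*} [LinearOrder A] (γ : Finset A) (w : List A) : Finset A :=
  w.foldl rIns γ

/-- The left action of a word on a column, `(uv)·γ = u·(v·γ)`. -/
def lActW {A : Type*} [LinearOrder A] (w : List A) (γ : Finset A) : Finset A :=
  w.foldr lIns γ

/-- The strictly decreasing word of a column `γ ⊆ A`. -/
def decWord {A : Type*} [LinearOrder A] (γ : Finset A) : List A :=
  (γ.sort (· ≤ ·)).reverse

/-!
Appending a letter `c` to the decreasing word of a column `γ` is the whole difficulty; the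
general case follows by induction on `w`. Write the decreasing word as `P m Q` where `P > c`
and `m ≤ c`, so `m` is the letter bumped by `c`. Knuth moves of the form `y q c ≡ y c q`
(`q < y ≤ c`) carry `c` leftwards through `Q`, and moves `x m y ≡ m x y` (`m ≤ y < x`) then
carry `m` leftwards through `P`, giving `P m Q c ≡ m · P c Q`, and `P c Q` is the decreasing
word of `γ·c`.
-/

open List

section Congruence

variable {A : Type*} [LinearOrder A]

lemma stylCon_of_stylicRel {x y : FreeMonoid A} (h : StylicRel A x y) : stylCon A x y :=
  ConGen.Rel.of _ _ h

lemma stylCon_append_left (t : List A) {a b : List A} (h : stylCon A (ofList a) (ofList b)) :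
    stylCon A (ofList (t ++ a)) (ofList (t ++ b)) := by
  rw [ofList_append, ofList_append]
  exact (stylCon A).mul ((stylCon A).refl _) h

lemma stylCon_append_right (t : List A) {a b : List A} (h : stylCon A (ofList a) (ofList b)) :
    stylCon A (ofList (a ++ t)) (ofList (b ++ t)) := by
  rw [ofList_append, ofList_append]
  exact (stylCon A).mul h ((stylCon A).refl _)

lemma stylCon_swap_right {q y c : A} (hqy : q < y) (hyc : y ≤ c) :
    stylCon A (ofList [y, q, c]) (ofList [y, c, q]) := by
  rcases hyc.lt_or_eq with hyc | rfl
  · exact stylCon_of_stylicRel (.knuth1 hqy hyc)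
  · exact stylCon_of_stylicRel (.knuth3 hqy)

lemma stylCon_swap_left {m y x : A} (hmy : m ≤ y) (hyx : y < x) :
    stylCon A (ofList [x, m, y]) (ofList [m, x, y]) := by
  rcases hmy.lt_or_eq with hmy | rfl
  · exact (stylCon A).symm (stylCon_of_stylicRel (.knuth2 hmy hyx))
  · exact (stylCon A).symm (stylCon_of_stylicRel (.knuth4 hyx))

lemma stylCon_cons_append_singleton {y c : A} {Q : List A}
    (hQ : (y :: Q).Pairwise (· > ·)) (hyc : y ≤ c) :
    stylCon A (ofList (y :: (Q ++ [c]))) (ofList (y :: c :: Q)) := by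
  induction Q generalizing y with
  | nil => exact (stylCon A).refl _
  | cons q Q ih =>
    obtain ⟨hqy, hQ'⟩ : q < y ∧ (q :: Q).Pairwise (· > ·) := by
      simp only [pairwise_cons, mem_cons] at hQ ⊢
      exact ⟨hQ.1 q (.inl rfl), hQ.2⟩
    have moveQ := stylCon_append_left [y] (ih hQ' (hqy.le.trans hyc))
    have swap := stylCon_append_right Q (stylCon_swap_right hqy hyc)
    exact (stylCon A).trans moveQ swap

lemma stylCon_append_cons_cons {m y : A} {P : List A} (R : List A)
    (hP : (P ++ [y]).Pairwise (· > ·)) (hmy : m ≤ y) :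
    stylCon A (ofList (P ++ m :: y :: R)) (ofList (m :: (P ++ y :: R))) := by
  induction P using List.reverseRecOn generalizing y R with
  | nil => exact (stylCon A).refl _
  | append_singleton P p ih =>
    obtain ⟨hP', hyp⟩ : (P ++ [p]).Pairwise (· > ·) ∧ y < p := by
      simp only [pairwise_append, mem_singleton] at hP ⊢
      exact ⟨hP.1, hP.2.2 p (by simp) y rfl⟩
    have swap := stylCon_append_left P (stylCon_append_right R (stylCon_swap_left hmy hyp))
    have moveP := ih (y :: R) hP' (hmy.trans hyp.le)
    simp only [append_assoc, cons_append, nil_append] at swap moveP ⊢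
    exact (stylCon A).trans swap moveP

lemma stylCon_bump {m c : A} {P Q : List A} (hl : (P ++ m :: Q).Pairwise (· > ·))
    (hPc : ∀ x ∈ P, c < x) (hmc : m ≤ c) :
    stylCon A (ofList (P ++ m :: Q ++ [c])) (ofList (m :: (P ++ c :: Q))) := by
  have hPc' : (P ++ [c]).Pairwise (· > ·) :=
    pairwise_append.2 ⟨(pairwise_append.1 hl).1, by simp, by simpa using hPc⟩
  have moveC := stylCon_append_left P
    (stylCon_cons_append_singleton (pairwise_append.1 hl).2.1 hmc)
  simp only [append_assoc, cons_append] at moveC ⊢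
  exact (stylCon A).trans moveC (stylCon_append_cons_cons Q hPc' hmc)

end Congruence

section Column

variable {A : Type*} [LinearOrder A]

lemma pairwise_decWord (γ : Finset A) : (decWord γ).Pairwise (· > ·) := by
  simpa [decWord, pairwise_reverse] using (Finset.sortedLT_sort γ).pairwise

@[simp]
lemma mem_decWord {γ : Finset A} {x : A} : x ∈ decWord γ ↔ x ∈ γ := by
  simp [decWord]

lemma toFinset_decWord (γ : Finset A) : (decWord γ).toFinset = γ := by
  ext; simp

lemma decWord_toFinset {l : List A} (hl : l.Pairwise (· > ·)) : decWord l.toFinset = l := by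
  have hsort : l.toFinset.sort (· ≤ ·) = l.reverse := by
    rw [← toFinset_reverse, List.toFinset_sort _ (nodup_reverse.2 (hl.imp ne_of_gt))]
    simpa [pairwise_reverse] using hl.imp le_of_lt
  simp [decWord, hsort]

lemma forall_lt_or_exists_bump (l : List A) (c : A) :
    (∀ x ∈ l, c < x) ∨ ∃ P m Q, l = P ++ m :: Q ∧ (∀ x ∈ P, c < x) ∧ m ≤ c := by
  induction l with
  | nil => simp
  | cons a l ih =>
    rcases le_or_gt a c with hac | hca
    · exact .inr ⟨[], a, l, rfl, by simp, hac⟩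
    · rcases ih with hl | ⟨P, m, Q, rfl, hPc, hmc⟩
      · exact .inl (by simpa [hca] using hl)
      · exact .inr ⟨a :: P, m, Q, rfl, by simpa [hca] using hPc, hmc⟩

lemma rIns_of_forall_lt {γ : Finset A} {c : A} (h : ∀ x ∈ γ, c < x) : rIns γ c = insert c γ := by
  have : ¬ (γ.filter (· ≤ c)).Nonempty := by
    simpa [Finset.filter_nonempty_iff] using h
  simp [rIns, this]

lemma rIns_of_isGreatest {γ : Finset A} {c m : A} (hm : IsGreatest {x ∈ γ | x ≤ c} m) :
    rIns γ c = insert c (γ.erase m) := by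
  have hne : (γ.filter (· ≤ c)).Nonempty := ⟨m, by simpa using hm.1⟩
  have hmax : (γ.filter (· ≤ c)).max' hne = m := by
    refine le_antisymm (Finset.max'_le _ _ _ fun x hx => hm.2 (by simpa using hx)) ?_
    exact Finset.le_max' _ _ (by simpa using hm.1)
  simp [rIns, hne, hmax]

lemma rIns_toFinset_of_bump {m c : A} {P Q : List A} (hl : (P ++ m :: Q).Pairwise (· > ·))
    (hPc : ∀ x ∈ P, c < x) (hmc : m ≤ c) :
    rIns (P ++ m :: Q).toFinset c = (P ++ c :: Q).toFinset := by
  obtain ⟨hP, hQ, hPQ⟩ := pairwise_append.1 hl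
  have hQm : ∀ x ∈ Q, x < m := (pairwise_cons.1 hQ).1
  have hbump : IsGreatest {x ∈ (P ++ m :: Q).toFinset | x ≤ c} m := by
    refine ⟨by simp [hmc], fun x hx => ?_⟩
    simp only [Set.mem_ofPred_eq, mem_toFinset, mem_append, mem_cons] at hx
    rcases hx with ⟨hxP | rfl | hxQ, hxc⟩
    · exact absurd hxc (hPc x hxP).not_ge
    · exact le_rfl
    · exact (hQm x hxQ).le
  have hmP : m ∉ P := fun h => lt_irrefl m (hPQ m h m (mem_cons_self ..))
  have hmQ : m ∉ Q := fun h => lt_irrefl m (hQm m h)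
  rw [rIns_of_isGreatest hbump]
  ext x
  simp only [Finset.mem_insert, Finset.mem_erase, mem_toFinset, mem_append, mem_cons]
  grind

lemma exists_decWord_rIns (γ : Finset A) (c : A) :
    ∃ u : List A, stylCon A (ofList (decWord γ ++ [c])) (ofList (u ++ decWord (rIns γ c))) := by
  rcases forall_lt_or_exists_bump (decWord γ) c with hgt | ⟨P, m, Q, hγ, hPc, hmc⟩
  · have hγc : (decWord γ ++ [c]).Pairwise (· > ·) :=
      pairwise_append.2 ⟨pairwise_decWord γ, by simp, by simpa using hgt⟩
    have hins : rIns γ c = (decWord γ ++ [c]).toFinset := by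
      rw [rIns_of_forall_lt (by simpa using hgt)]
      simp [toFinset_decWord, Finset.union_singleton]
    exact ⟨[], by rw [hins, decWord_toFinset hγc]; exact (stylCon A).refl _⟩
  · have hl := pairwise_decWord γ
    rw [hγ] at hl
    have hins : rIns γ c = (P ++ c :: Q).toFinset := by
      rw [← toFinset_decWord γ, hγ, rIns_toFinset_of_bump hl hPc hmc]
    have hPcQ : (P ++ c :: Q).Pairwise (· > ·) := by
      obtain ⟨hP, hQ, hPQ⟩ := pairwise_append.1 hl
      refine pairwise_append.2 ⟨hP, pairwise_cons.2 ⟨fun x hx => ?_, (pairwise_cons.1 hQ).2⟩, ?_⟩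
      · exact ((pairwise_cons.1 hQ).1 x hx).trans_le hmc
      · intro x hx y hy
        rcases mem_cons.1 hy with rfl | hy
        · exact hPc x hx
        · exact hPQ x hx y (mem_cons_of_mem _ hy)
    refine ⟨[m], ?_⟩
    rw [hins, decWord_toFinset hPcQ, hγ]
    exact stylCon_bump hl hPc hmc

end Column

/-- Corollary `gamma-w`: for every word `w` and column `γ`
there is a word `u` with `γw ≡_styl u(γ·w)`. -/
theorem column_word_congr {A : Type*} [LinearOrder A]
    (γ : Finset A) (w : List A) :
    ∃ u : List A,
      stylCon A (ofList (decWord γ ++ w)) (ofList (u ++ decWord (rActW γ w))) := by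
  induction w generalizing γ with
  | nil => exact ⟨[], by simpa [rActW] using (stylCon A).refl _⟩
  | cons c w ih =>
    obtain ⟨u, hc⟩ := exists_decWord_rIns γ c
    obtain ⟨v, hw⟩ := ih (rIns γ c)
    refine ⟨u ++ v, ?_⟩
    have hcw := stylCon_append_right w hc
    simp only [append_assoc, singleton_append] at hcw
    simpa [rActW] using (stylCon A).trans hcw (stylCon_append_left u hw)
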